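/- arXiv:2603.29117 — 4 statements merged into one kernel-verified Lean document; each statement's English description precedes it below -/
import Mathlib

section
/- Let D₁, D₂ : (0,∞) → (0,∞) be continuously differentiable and define φᵢ(t) := t − Dᵢ(t) for i ∈ {1,2}. Assume each φᵢ satisfies Assumptions A1 and A2; in particular φᵢ′(t) ≥ π₂* > 0 for all t > 0. Then for every y in the common range R := φ₁((0,∞)) ∩ φ₂((0,∞)), |Ψ(D₁)(y) − Ψ(D₂)(y)| ≤ (1/π₂*) · sup_{t > 0} |D₁(t) − D₂(t)|, where Ψ(Dᵢ)(y) := φᵢ⁻¹(y) − y. -/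
lemma key_lipschitz_aux (D₁ D₂ : ℝ → ℝ) (π₂ : ℝ) (hπ₂ : 0 < π₂)
    (hD₁diff : ∀ t > (0:ℝ), DifferentiableAt ℝ D₁ t)
    (hA2₁ : ∀ t > (0:ℝ), π₂ ≤ 1 - deriv D₁ t)
    (x₁ x₂ : ℝ) (hx₁ : 0 < x₁) (hx₂ : 0 < x₂) (hle : x₂ ≤ x₁)
    (heq : x₁ - D₁ x₁ = x₂ - D₂ x₂)
    (Mb : ℝ) (hMb : ∀ t > (0:ℝ), |D₁ t - D₂ t| ≤ Mb) :
    x₁ - x₂ ≤ (1 / π₂) * Mb := by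
  set f : ℝ → ℝ := fun t => t - D₁ t with hf
  have hdf : ∀ t ∈ Set.Ioi (0:ℝ), DifferentiableAt ℝ f t := fun t ht =>
    (differentiableAt_id.sub (hD₁diff t ht))
  have hderiv : ∀ t ∈ interior (Set.Ioi (0:ℝ)), π₂ ≤ deriv f t := by
    rw [interior_Ioi]
    intro t ht
    have : deriv f t = 1 - deriv D₁ t := by
      rw [hf]
      rw [deriv_fun_sub differentiableAt_fun_id (hD₁diff t ht), deriv_id'']
    rw [this]; exact hA2₁ t ht
  have hcont : ContinuousOn f (Set.Ioi 0) := fun t ht =>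
    (hdf t ht).continuousAt.continuousWithinAt
  have hdiffOn : DifferentiableOn ℝ f (interior (Set.Ioi (0:ℝ))) := by
    rw [interior_Ioi]; exact fun t ht => (hdf t ht).differentiableWithinAt
  have hmvt := (convex_Ioi (0:ℝ)).mul_sub_le_image_sub_of_le_deriv hcont hdiffOn hderiv
      x₂ hx₂ x₁ hx₁ hle
  have hfd : f x₁ - f x₂ = D₁ x₂ - D₂ x₂ := by
    simp only [hf]; linarith
  have h1 : π₂ * (x₁ - x₂) ≤ Mb := by
    have := (le_abs_self (D₁ x₂ - D₂ x₂)).trans (hMb x₂ hx₂)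
    linarith
  rw [div_mul_eq_mul_div, one_mul, le_div_iff₀ hπ₂]
  linarith

/-- Lemma 3 of the paper: Lipschitz dependence of the prediction-horizon
operator `Ψ(D)(y) = φ⁻¹(y) − y` (with `φ(t) = t − D(t)`) on the delay function `D`.
For `y` in the common range of `φ₁` and `φ₂` we represent `φᵢ⁻¹(y)` by any preimage
`xᵢ > 0` with `φᵢ(xᵢ) = y`, and the supremum `sup_{t>0}|D₁(t) − D₂(t)|` by an arbitrary
upper bound `Mb`. -/
theorem prediction_horizon_lipschitz_in_delay
    (D₁ D₂ : ℝ → ℝ) (π₀ π₁ π₂ : ℝ)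
    (hπ₀ : 0 < π₀) (hπ₁ : 0 < π₁) (hπ₂ : 0 < π₂)
    -- D₁, D₂ : (0,∞) → (0,∞) continuously differentiable
    (hD₁pos : ∀ t > (0:ℝ), 0 < D₁ t) (hD₂pos : ∀ t > (0:ℝ), 0 < D₂ t)
    (hD₁smooth : ContDiffOn ℝ 1 D₁ (Set.Ioi 0)) (hD₂smooth : ContDiffOn ℝ 1 D₂ (Set.Ioi 0))
    (hD₁diff : ∀ t > (0:ℝ), DifferentiableAt ℝ D₁ t)
    (hD₂diff : ∀ t > (0:ℝ), DifferentiableAt ℝ D₂ t)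
    -- Assumption A1 for each φᵢ(t) = t − Dᵢ(t): t − φᵢ(t) ≥ π₀* and
    -- π₁* · (ν − φᵢ(ν)) ≤ 1 for all ν ≥ φᵢ⁻¹(0) (i.e. with φᵢ(ν) ≥ 0)
    (hA1₁ : ∀ t > (0:ℝ), π₀ ≤ D₁ t) (hA1₂ : ∀ t > (0:ℝ), π₀ ≤ D₂ t)
    (hA1₁' : ∀ ν > (0:ℝ), 0 ≤ ν - D₁ ν → π₁ * D₁ ν ≤ 1)
    (hA1₂' : ∀ ν > (0:ℝ), 0 ≤ ν - D₂ ν → π₁ * D₂ ν ≤ 1)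
    -- Assumption A2: φᵢ′(t) = 1 − Dᵢ′(t) ≥ π₂* > 0
    (hA2₁ : ∀ t > (0:ℝ), π₂ ≤ 1 - deriv D₁ t)
    (hA2₂ : ∀ t > (0:ℝ), π₂ ≤ 1 - deriv D₂ t) :
    ∀ y : ℝ, ∀ x₁ > (0:ℝ), ∀ x₂ > (0:ℝ),
      x₁ - D₁ x₁ = y → x₂ - D₂ x₂ = y →
      ∀ Mb : ℝ, (∀ t > (0:ℝ), |D₁ t - D₂ t| ≤ Mb) →
        |(x₁ - y) - (x₂ - y)| ≤ (1 / π₂) * Mb := by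
  intro y x₁ hx₁ x₂ hx₂ h₁ h₂ Mb hMb
  have heq : x₁ - D₁ x₁ = x₂ - D₂ x₂ := by rw [h₁, h₂]
  have hMb' : ∀ t > (0:ℝ), |D₂ t - D₁ t| ≤ Mb := fun t ht => (abs_sub_comm (D₂ t) (D₁ t)) ▸ hMb t ht
  have hsimp : (x₁ - y) - (x₂ - y) = x₁ - x₂ := by ring
  rw [hsimp, abs_le]
  rcases le_total x₂ x₁ with h | h
  · constructor
    · have hMb0 : 0 ≤ Mb := le_trans (abs_nonneg _) (hMb x₁ hx₁)
      have : 0 ≤ (1/π₂) * Mb := by positivity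
      linarith
    · exact key_lipschitz_aux D₁ D₂ π₂ hπ₂ hD₁diff hA2₁ x₁ x₂ hx₁ hx₂ h heq Mb hMb
  · constructor
    · have := key_lipschitz_aux D₂ D₁ π₂ hπ₂ hD₂diff hA2₂ x₂ x₁ hx₂ hx₁ h heq.symm Mb hMb'
      linarith
    · have hMb0 : 0 ≤ Mb := le_trans (abs_nonneg _) (hMb x₁ hx₁)
      have : 0 ≤ (1/π₂) * Mb := by positivity
      linarith
end

section
/- Let π₀*, π₁*, π₂*, β* > 0 and b > 0 be constants. Let w : [0,1] → ℝ be continuously differentiable and let π : [0,1] → ℝ be continuously differentiable with π(0) ≥ π₁*, π(1) ≤ 1/(π₀* π₂*), and b π(x) + π′(x) ≥ π₁* β* for all x ∈ [0,1]. Then ∫₀¹ e^{b x} w(x) π(x) w′(x) dx ≤ −(π₁*/2) w(0)² + (e^{b}/(2 π₀* π₂*)) w(1)² − π₁* β* · (1/2) ∫₀¹ e^{b x} w(x)² dx. -/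
/-- the integration-by-parts estimate for the weighted transport
Lyapunov functional: for `w, π : [0,1] → ℝ` continuously differentiable with
`π(0) ≥ π₁*`, `π(1) ≤ 1/(π₀* π₂*)` and `b π(x) + π′(x) ≥ π₁* β*` on `[0,1]`,
`∫₀¹ e^{bx} w π w′ ≤ −(π₁*/2) w(0)² + (e^b/(2π₀*π₂*)) w(1)² − π₁* β* (1/2)∫₀¹ e^{bx} w²`. -/
theorem transport_lyapunov_integration_by_parts
    (π₀ π₁ π₂ β b : ℝ)
    (hπ₀ : 0 < π₀) (hπ₁ : 0 < π₁) (hπ₂ : 0 < π₂) (hβ : 0 < β) (hb : 0 < b)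
    (w q : ℝ → ℝ)
    (hw : ContDiffOn ℝ 1 w (Set.Icc 0 1)) (hq : ContDiffOn ℝ 1 q (Set.Icc 0 1))
    (hq0 : π₁ ≤ q 0) (hq1 : q 1 ≤ 1 / (π₀ * π₂))
    (hdamp : ∀ x ∈ Set.Icc (0:ℝ) 1,
      π₁ * β ≤ b * q x + derivWithin q (Set.Icc 0 1) x) :
    ∫ x in (0:ℝ)..1, Real.exp (b * x) * w x * q x * derivWithin w (Set.Icc 0 1) x
      ≤ -(π₁ / 2) * (w 0) ^ 2 + (Real.exp b / (2 * π₀ * π₂)) * (w 1) ^ 2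
        - π₁ * β * ((1 / 2) * ∫ x in (0:ℝ)..1, Real.exp (b * x) * (w x) ^ 2) := by
  have h01 : (0:ℝ) ≤ 1 := zero_le_one
  have hUD : UniqueDiffOn ℝ (Set.Icc (0:ℝ) 1) := uniqueDiffOn_Icc zero_lt_one
  set w' := derivWithin w (Set.Icc (0:ℝ) 1) with hw'def
  set q' := derivWithin q (Set.Icc (0:ℝ) 1) with hq'def
  have hwc : ContinuousOn w (Set.Icc (0:ℝ) 1) := hw.continuousOn
  have hqc : ContinuousOn q (Set.Icc (0:ℝ) 1) := hq.continuousOn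
  have hw'c : ContinuousOn w' (Set.Icc (0:ℝ) 1) := hw.continuousOn_derivWithin hUD le_rfl
  have hq'c : ContinuousOn q' (Set.Icc (0:ℝ) 1) := hq.continuousOn_derivWithin hUD le_rfl
  have hec : ContinuousOn (fun x => Real.exp (b * x)) (Set.Icc (0:ℝ) 1) :=
    (Real.continuous_exp.comp (continuous_const.mul continuous_id)).continuousOn
  -- the full derivative of F x = exp(bx) q w² / 2
  set g : ℝ → ℝ := fun x =>
    Real.exp (b * x) * ((b * q x + q' x) * (w x) ^ 2 / 2 + q x * w x * w' x) with hgdef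
  have hgc : ContinuousOn g (Set.Icc (0:ℝ) 1) := by
    apply hec.mul
    exact (((continuousOn_const.mul hqc |>.add hq'c).mul (hwc.pow 2)).div_const 2).add
      ((hqc.mul hwc).mul hw'c)
  have hgint : IntervalIntegrable g MeasureTheory.volume 0 1 := by
    apply ContinuousOn.intervalIntegrable
    rwa [Set.uIcc_of_le h01]
  set F : ℝ → ℝ := fun x => Real.exp (b * x) * q x * (w x) ^ 2 / 2 with hFdef
  have hFc : ContinuousOn F (Set.Icc (0:ℝ) 1) :=
    ((hec.mul hqc).mul (hwc.pow 2)).div_const 2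
  have key : ∫ x in (0:ℝ)..1, g x = F 1 - F 0 := by
    apply intervalIntegral.integral_eq_sub_of_hasDeriv_right_of_le h01 hFc _ hgint
    intro x hx
    have hxI : x ∈ Set.Icc (0:ℝ) 1 := Set.mem_Icc_of_Ioo hx
    have hnb : Set.Icc (0:ℝ) 1 ∈ nhds x := Icc_mem_nhds hx.1 hx.2
    have hwx : HasDerivAt w (w' x) x :=
      ((hw.differentiableOn one_ne_zero x hxI).hasDerivWithinAt).hasDerivAt hnb
    have hqx : HasDerivAt q (q' x) x :=
      ((hq.differentiableOn one_ne_zero x hxI).hasDerivWithinAt).hasDerivAt hnb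
    have hex : HasDerivAt (fun x => Real.exp (b * x)) (Real.exp (b * x) * b) x := by
      have : HasDerivAt (fun y : ℝ => b * y) b x := by
        simpa using (hasDerivAt_id x).const_mul b
      exact this.exp
    have hF : HasDerivAt F
        (((Real.exp (b * x) * b * q x + Real.exp (b * x) * q' x) * (w x) ^ 2
          + Real.exp (b * x) * q x * ((2 : ℕ) * (w x) ^ 1 * w' x)) / 2) x :=
      ((hex.mul hqx).mul (hwx.pow 2)).div_const 2
    have : HasDerivAt F (g x) x := by
      convert hF using 1
      simp [hgdef]
      ring
    exact this.hasDerivWithinAt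
  -- split g into the damping part and the target part
  set g₁ : ℝ → ℝ := fun x => Real.exp (b * x) * (b * q x + q' x) * (w x) ^ 2 / 2 with hg1def
  have hg1c : ContinuousOn g₁ (Set.Icc (0:ℝ) 1) :=
    ((hec.mul (continuousOn_const.mul hqc |>.add hq'c)).mul (hwc.pow 2)).div_const 2
  have hg1int : IntervalIntegrable g₁ MeasureTheory.volume 0 1 := by
    apply ContinuousOn.intervalIntegrable
    rwa [Set.uIcc_of_le h01]
  have hhint : IntervalIntegrable
      (fun x => Real.exp (b * x) * w x * q x * w' x) MeasureTheory.volume 0 1 := by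
    apply ContinuousOn.intervalIntegrable
    rw [Set.uIcc_of_le h01]
    exact ((hec.mul hwc).mul hqc).mul hw'c
  have hw2int : IntervalIntegrable
      (fun x => Real.exp (b * x) * (w x) ^ 2) MeasureTheory.volume 0 1 := by
    apply ContinuousOn.intervalIntegrable
    rw [Set.uIcc_of_le h01]
    exact hec.mul (hwc.pow 2)
  have hsplit : (∫ x in (0:ℝ)..1, Real.exp (b * x) * w x * q x * w' x)
      = (F 1 - F 0) - ∫ x in (0:ℝ)..1, g₁ x := by
    rw [← key, ← intervalIntegral.integral_sub hgint hg1int]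
    apply intervalIntegral.integral_congr
    intro x _
    simp only [hgdef, hg1def]
    ring
  rw [hsplit]
  -- bound the damping integral from below
  have hmono : (∫ x in (0:ℝ)..1, π₁ * β * (1 / 2) * (Real.exp (b * x) * (w x) ^ 2))
      ≤ ∫ x in (0:ℝ)..1, g₁ x := by
    apply intervalIntegral.integral_mono_on h01 (hw2int.const_mul _) hg1int
    intro x hx
    have h1 : π₁ * β ≤ b * q x + q' x := hdamp x hx
    have h2 : (0:ℝ) ≤ Real.exp (b * x) * (w x) ^ 2 / 2 :=
      div_nonneg (mul_nonneg (Real.exp_pos _).le (sq_nonneg _)) two_pos.le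
    have := mul_le_mul_of_nonneg_right h1 h2
    simp only [hg1def]
    nlinarith [this]
  rw [intervalIntegral.integral_const_mul] at hmono
  -- bound the boundary terms
  have hF1 : F 1 ≤ Real.exp b / (2 * π₀ * π₂) * (w 1) ^ 2 := by
    simp only [hFdef, mul_one]
    have h1 : Real.exp b * q 1 * (w 1) ^ 2 ≤ Real.exp b * (1 / (π₀ * π₂)) * (w 1) ^ 2 := by
      have := mul_le_mul_of_nonneg_left hq1 (Real.exp_pos b).le
      exact mul_le_mul_of_nonneg_right this (sq_nonneg _)
    have hpos : (0:ℝ) < π₀ * π₂ := mul_pos hπ₀ hπ₂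
    calc Real.exp b * q 1 * (w 1) ^ 2 / 2 ≤ Real.exp b * (1 / (π₀ * π₂)) * (w 1) ^ 2 / 2 := by
          linarith
      _ = Real.exp b / (2 * π₀ * π₂) * (w 1) ^ 2 := by
          ring
  have hF0 : -(F 0) ≤ -(π₁ / 2) * (w 0) ^ 2 := by
    simp only [hFdef, mul_zero, Real.exp_zero, one_mul]
    have := mul_le_mul_of_nonneg_right hq0 (sq_nonneg (w 0))
    linarith
  linarith
end

section
/- Let A ∈ ℝ^{n×n}, K ∈ ℝ^{m×n}, let π₁* > 0 and ε > 0, let ψ, ψ̂ ∈ [0, 1/π₁*] with |ψ̂ − ψ| ≤ ε, and let Z, Ẑ ∈ ℝⁿ. Define Ω₁ := ‖K‖ e^{‖A‖/π₁*} and δ₁(ε) := Ω₁ (e^{‖A‖ ε} − 1). Then |K(e^{A ψ̂} Ẑ − e^{A ψ} Z)| ≤ (Ω₁ + δ₁(ε)) |Ẑ − Z| + δ₁(ε) |Z|. -/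
open scoped Nat

set_option maxHeartbeats 1000000
set_option synthInstance.maxHeartbeats 400000

private lemma clm_norm_pow_le {n : ℕ} (x : EuclideanSpace ℝ (Fin n) →L[ℝ] EuclideanSpace ℝ (Fin n))
    (k : ℕ) : ‖x ^ k‖ ≤ ‖x‖ ^ k := by
  induction k with
  | zero =>
    rw [pow_zero, pow_zero, ContinuousLinearMap.one_def]
    exact ContinuousLinearMap.norm_id_le
  | succ k ih =>
    calc ‖x ^ (k + 1)‖ = ‖x ^ k * x‖ := by rw [pow_succ]
      _ ≤ ‖x ^ k‖ * ‖x‖ := norm_mul_le _ _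
      _ ≤ ‖x‖ ^ k * ‖x‖ := mul_le_mul_of_nonneg_right ih (norm_nonneg x)
      _ = ‖x‖ ^ (k + 1) := by ring

private lemma term_norm_le {n : ℕ} (x : EuclideanSpace ℝ (Fin n) →L[ℝ] EuclideanSpace ℝ (Fin n))
    (k : ℕ) : ‖(k !⁻¹ : ℝ) • x ^ k‖ ≤ ‖x‖ ^ k / k ! := by
  have h1 : ‖(k !⁻¹ : ℝ) • x ^ k‖ = ((k ! : ℝ))⁻¹ * ‖x ^ k‖ :=
    (norm_smul ((k ! : ℝ))⁻¹ (x ^ k)).trans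
      (by rw [Real.norm_eq_abs, abs_of_nonneg (by positivity : (0:ℝ) ≤ ((k ! : ℝ))⁻¹)])
  rw [h1, div_eq_inv_mul]
  exact mul_le_mul_of_nonneg_left (clm_norm_pow_le x k) (by positivity)

private lemma real_exp_hasSum {c : ℝ} :
    HasSum (fun k : ℕ => c ^ k / k !) (Real.exp c) := by
  simpa [Real.exp_eq_exp_ℝ] using NormedSpace.expSeries_div_hasSum_exp c

private lemma clm_norm_exp_le {n : ℕ}
    (x : EuclideanSpace ℝ (Fin n) →L[ℝ] EuclideanSpace ℝ (Fin n)) :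
    ‖NormedSpace.exp x‖ ≤ Real.exp ‖x‖ := by
  rw [NormedSpace.exp_eq_tsum ℝ]
  exact tsum_of_norm_bounded real_exp_hasSum (term_norm_le x)

private lemma clm_norm_exp_sub_one_le {n : ℕ}
    (x : EuclideanSpace ℝ (Fin n) →L[ℝ] EuclideanSpace ℝ (Fin n)) :
    ‖NormedSpace.exp x - 1‖ ≤ Real.exp ‖x‖ - 1 := by
  have hsum := NormedSpace.expSeries_summable' (𝕂 := ℝ) x
  have hexp : NormedSpace.exp x - 1 = ∑' k : ℕ, ((k + 1)!⁻¹ : ℝ) • x ^ (k + 1) := by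
    simp only [NormedSpace.exp_eq_tsum ℝ]
    rw [hsum.tsum_eq_zero_add]
    simp
  have hsR : HasSum (fun k : ℕ => ‖x‖ ^ (k + 1) / (k + 1)!) (Real.exp ‖x‖ - 1) := by
    have hs := (hasSum_nat_add_iff' (f := fun k : ℕ => ‖x‖ ^ k / k !) 1).2
      real_exp_hasSum
    simpa using hs
  rw [hexp]
  exact tsum_of_norm_bounded hsR (fun k => term_norm_le x (k + 1))

private lemma clm_smul_commute {n : ℕ}
    (A : EuclideanSpace ℝ (Fin n) →L[ℝ] EuclideanSpace ℝ (Fin n)) (a b : ℝ) :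
    Commute (a • A) (b • A) := by
  unfold Commute SemiconjBy
  rw [ContinuousLinearMap.mul_def, ContinuousLinearMap.mul_def,
    ContinuousLinearMap.smul_comp, ContinuousLinearMap.comp_smul,
    ContinuousLinearMap.smul_comp, ContinuousLinearMap.comp_smul, smul_comm]

private lemma clm_norm_smul {n : ℕ}
    (A : EuclideanSpace ℝ (Fin n) →L[ℝ] EuclideanSpace ℝ (Fin n)) (c : ℝ) :
    ‖c • A‖ = |c| * ‖A‖ :=
  (norm_smul c A).trans (by rw [Real.norm_eq_abs])

/-- bound on the first contribution to the boundary value `w(1,t)` of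
the backstepping target system: with `Ω₁ = ‖K‖e^{‖A‖/π₁*}` and
`δ₁(ε) = Ω₁(e^{‖A‖ε} − 1)`, for `ψ, ψ̂ ∈ [0, 1/π₁*]` with `|ψ̂ − ψ| ≤ ε`,
`|K(e^{Aψ̂}Ẑ − e^{Aψ}Z)| ≤ (Ω₁ + δ₁(ε))|Ẑ − Z| + δ₁(ε)|Z|`. -/
theorem backstepping_boundary_first_term_bound
    {n m : ℕ}
    (A : EuclideanSpace ℝ (Fin n) →L[ℝ] EuclideanSpace ℝ (Fin n))
    (K : EuclideanSpace ℝ (Fin n) →L[ℝ] EuclideanSpace ℝ (Fin m))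
    (π₁ ε ψ ψh : ℝ) (hπ₁ : 0 < π₁) (hε : 0 < ε)
    (hψ : ψ ∈ Set.Icc (0:ℝ) (1 / π₁)) (hψh : ψh ∈ Set.Icc (0:ℝ) (1 / π₁))
    (hclose : |ψh - ψ| ≤ ε)
    (Z Zh : EuclideanSpace ℝ (Fin n)) :
    ‖K (NormedSpace.exp (ψh • A) Zh - NormedSpace.exp (ψ • A) Z)‖
      ≤ (‖K‖ * Real.exp (‖A‖ / π₁) +
            ‖K‖ * Real.exp (‖A‖ / π₁) * (Real.exp (‖A‖ * ε) - 1)) * ‖Zh - Z‖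
        + ‖K‖ * Real.exp (‖A‖ / π₁) * (Real.exp (‖A‖ * ε) - 1) * ‖Z‖ := by
  have hAnn : (0:ℝ) ≤ ‖A‖ := norm_nonneg _
  -- norm bounds on the exponents
  have hb : ‖ψh • A‖ ≤ ‖A‖ / π₁ := by
    rw [clm_norm_smul, abs_of_nonneg hψh.1]
    calc ψh * ‖A‖ ≤ (1 / π₁) * ‖A‖ := mul_le_mul_of_nonneg_right hψh.2 hAnn
      _ = ‖A‖ / π₁ := by ring
  have ha : ‖ψ • A‖ ≤ ‖A‖ / π₁ := by
    rw [clm_norm_smul, abs_of_nonneg hψ.1]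
    calc ψ * ‖A‖ ≤ (1 / π₁) * ‖A‖ := mul_le_mul_of_nonneg_right hψ.2 hAnn
      _ = ‖A‖ / π₁ := by ring
  have hδ : ‖(ψh - ψ) • A‖ ≤ ‖A‖ * ε := by
    rw [clm_norm_smul]
    calc |ψh - ψ| * ‖A‖ ≤ ε * ‖A‖ := mul_le_mul_of_nonneg_right hclose hAnn
      _ = ‖A‖ * ε := by ring
  have hEb : ‖NormedSpace.exp (ψh • A)‖ ≤ Real.exp (‖A‖ / π₁) :=
    (clm_norm_exp_le _).trans (Real.exp_le_exp.2 hb)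
  have hEa : ‖NormedSpace.exp (ψ • A)‖ ≤ Real.exp (‖A‖ / π₁) :=
    (clm_norm_exp_le _).trans (Real.exp_le_exp.2 ha)
  -- splitting the exponential
  have hsplit : NormedSpace.exp (ψh • A)
      = NormedSpace.exp (ψ • A) * NormedSpace.exp ((ψh - ψ) • A) := by
    rw [← NormedSpace.exp_add_of_commute_of_mem_ball (𝕂 := ℝ) (clm_smul_commute A ψ (ψh - ψ))
      ((NormedSpace.expSeries_radius_eq_top ℝ
        (EuclideanSpace ℝ (Fin n) →L[ℝ] EuclideanSpace ℝ (Fin n))).symm ▸ edist_lt_top _ _)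
      ((NormedSpace.expSeries_radius_eq_top ℝ
        (EuclideanSpace ℝ (Fin n) →L[ℝ] EuclideanSpace ℝ (Fin n))).symm ▸ edist_lt_top _ _)]
    congr 1
    module
  have hdiff : ‖NormedSpace.exp (ψh • A) - NormedSpace.exp (ψ • A)‖
      ≤ Real.exp (‖A‖ / π₁) * (Real.exp (‖A‖ * ε) - 1) := by
    have heq : NormedSpace.exp (ψh • A) - NormedSpace.exp (ψ • A)
        = NormedSpace.exp (ψ • A) * (NormedSpace.exp ((ψh - ψ) • A) - 1) := by
      rw [mul_sub, mul_one, ← hsplit]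
    have h2 : ‖NormedSpace.exp ((ψh - ψ) • A) - 1‖ ≤ Real.exp (‖A‖ * ε) - 1 :=
      (clm_norm_exp_sub_one_le _).trans (by
        have := Real.exp_le_exp.2 hδ
        linarith)
    rw [heq]
    exact (norm_mul_le _ _).trans
      (mul_le_mul hEa h2 (norm_nonneg _) (Real.exp_nonneg _))
  -- decomposition of the boundary term
  have key : K (NormedSpace.exp (ψh • A) Zh - NormedSpace.exp (ψ • A) Z)
      = K ((NormedSpace.exp (ψh • A)) (Zh - Z))
        + K ((NormedSpace.exp (ψh • A) - NormedSpace.exp (ψ • A)) Z) := by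
    rw [← map_add]
    congr 1
    rw [map_sub, ContinuousLinearMap.sub_apply]
    abel
  have t1 : ‖K ((NormedSpace.exp (ψh • A)) (Zh - Z))‖
      ≤ ‖K‖ * (Real.exp (‖A‖ / π₁) * ‖Zh - Z‖) :=
    (K.le_opNorm _).trans (mul_le_mul_of_nonneg_left
      (((NormedSpace.exp (ψh • A)).le_opNorm _).trans
        (mul_le_mul_of_nonneg_right hEb (norm_nonneg _))) (norm_nonneg K))
  have t2 : ‖K ((NormedSpace.exp (ψh • A) - NormedSpace.exp (ψ • A)) Z)‖
      ≤ ‖K‖ * ((Real.exp (‖A‖ / π₁) * (Real.exp (‖A‖ * ε) - 1)) * ‖Z‖) :=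
    (K.le_opNorm _).trans (mul_le_mul_of_nonneg_left
      (((NormedSpace.exp (ψh • A) - NormedSpace.exp (ψ • A)).le_opNorm _).trans
        (mul_le_mul_of_nonneg_right hdiff (norm_nonneg _))) (norm_nonneg K))
  have hone : (1:ℝ) ≤ Real.exp (‖A‖ * ε) := Real.one_le_exp (by positivity)
  have hK : (0:ℝ) ≤ ‖K‖ := norm_nonneg _
  have h1 : (0:ℝ) ≤ Real.exp (‖A‖ / π₁) := Real.exp_nonneg _
  have h2 : (0:ℝ) ≤ ‖Zh - Z‖ := norm_nonneg _
  have htri : ‖K (NormedSpace.exp (ψh • A) Zh - NormedSpace.exp (ψ • A) Z)‖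
      ≤ ‖K ((NormedSpace.exp (ψh • A)) (Zh - Z))‖
        + ‖K ((NormedSpace.exp (ψh • A) - NormedSpace.exp (ψ • A)) Z)‖ := by
    rw [key]; exact norm_add_le _ _
  nlinarith [mul_nonneg (mul_nonneg hK h1) (mul_nonneg (sub_nonneg.2 hone) h2)]
end

section
/- Let A ∈ ℝ^{n×n}, B ∈ ℝ^{n×m}, K ∈ ℝ^{m×n}, let π₁* > 0 and ε > 0, let ψ, ψ̂ ∈ (0, 1/π₁*] with |ψ̂ − ψ| ≤ ε, and let u : [0,1] → ℝᵐ be continuous. Define Ω₁ := ‖K‖ e^{‖A‖/π₁*} and δ₁(ε) := Ω₁ (e^{‖A‖ ε} − 1). Then |K ∫₀¹ B u(y) [ψ̂ e^{A(1−y)ψ̂} − ψ e^{A(1−y)ψ}] dy| ≤ ‖B‖ (Ω₁ ε + ψ δ₁(ε)) ∫₀¹ |u(y)| dy ≤ ‖B‖ (Ω₁ ε + δ₁(ε)/π₁*) (∫₀¹ |u(y)|² dy)^{1/2}. -/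
open NormedSpace

lemma aux_norm_exp_le {𝔸 : Type*} [NormedRing 𝔸] [NormedAlgebra ℝ 𝔸] [CompleteSpace 𝔸]
    (h1 : ‖(1:𝔸)‖ ≤ 1) (x : 𝔸) : ‖exp x‖ ≤ Real.exp ‖x‖ := by
  have hx : ∀ k : ℕ, ‖x ^ k‖ ≤ ‖x‖ ^ k := fun k => by
    cases k with
    | zero => simpa using h1
    | succ k => exact norm_pow_le' x k.succ_pos
  have hb : ∀ k : ℕ, ‖((Nat.factorial k : ℝ))⁻¹ • x ^ k‖ ≤ ‖x‖ ^ k / (Nat.factorial k : ℝ) := by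
    intro k
    rw [norm_smul, Real.norm_eq_abs, abs_of_nonneg (by positivity), div_eq_inv_mul]
    exact mul_le_mul_of_nonneg_left (hx k) (by positivity)
  have hsum : HasSum (fun k : ℕ => ‖x‖ ^ k / (Nat.factorial k : ℝ)) (Real.exp ‖x‖) := by
    rw [Real.exp_eq_exp_ℝ]
    exact expSeries_div_hasSum_exp ‖x‖
  have hsummable : Summable (fun k : ℕ => ‖((Nat.factorial k : ℝ))⁻¹ • x ^ k‖) :=
    Summable.of_nonneg_of_le (fun _ => norm_nonneg _) hb hsum.summable
  have hfs := exp_series_hasSum_exp' (𝕂 := ℝ) x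
  calc ‖exp x‖ = ‖∑' k : ℕ, ((Nat.factorial k : ℝ))⁻¹ • x ^ k‖ := by rw [hfs.tsum_eq]
    _ ≤ ∑' k : ℕ, ‖((Nat.factorial k : ℝ))⁻¹ • x ^ k‖ := norm_tsum_le_tsum_norm hsummable
    _ ≤ ∑' k : ℕ, ‖x‖ ^ k / (Nat.factorial k : ℝ) := Summable.tsum_le_tsum hb hsummable hsum.summable
    _ = Real.exp ‖x‖ := hsum.tsum_eq

lemma aux_norm_exp_sub_one_le {𝔸 : Type*} [NormedRing 𝔸] [NormedAlgebra ℝ 𝔸] [CompleteSpace 𝔸]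
    (x : 𝔸) : ‖exp x - 1‖ ≤ Real.exp ‖x‖ - 1 := by
  have hf : HasSum (fun k : ℕ => ((Nat.factorial (k+1) : ℝ))⁻¹ • x ^ (k+1)) (exp x - 1) := by
    refine (hasSum_nat_add_iff (f := fun k : ℕ => ((Nat.factorial k : ℝ))⁻¹ • x ^ k) 1).mpr ?_
    simpa using exp_series_hasSum_exp' (𝕂 := ℝ) x
  have hg : HasSum (fun k : ℕ => ‖x‖ ^ (k+1) / (Nat.factorial (k+1) : ℝ)) (Real.exp ‖x‖ - 1) := by
    refine (hasSum_nat_add_iff (f := fun k : ℕ => ‖x‖ ^ k / (Nat.factorial k : ℝ)) 1).mpr ?_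
    have h := expSeries_div_hasSum_exp ‖x‖
    rw [Real.exp_eq_exp_ℝ]
    simpa using h
  have hb : ∀ k : ℕ, ‖((Nat.factorial (k+1) : ℝ))⁻¹ • x ^ (k+1)‖ ≤ ‖x‖ ^ (k+1) / (Nat.factorial (k+1) : ℝ) := by
    intro k
    rw [norm_smul, Real.norm_eq_abs, abs_of_nonneg (by positivity), div_eq_inv_mul]
    exact mul_le_mul_of_nonneg_left (norm_pow_le' x k.succ_pos) (by positivity)
  have hsummable : Summable (fun k : ℕ => ‖((Nat.factorial (k+1) : ℝ))⁻¹ • x ^ (k+1)‖) :=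
    Summable.of_nonneg_of_le (fun _ => norm_nonneg _) hb hg.summable
  calc ‖exp x - 1‖ = ‖∑' k : ℕ, ((Nat.factorial (k+1) : ℝ))⁻¹ • x ^ (k+1)‖ := by rw [hf.tsum_eq]
    _ ≤ ∑' k : ℕ, ‖((Nat.factorial (k+1) : ℝ))⁻¹ • x ^ (k+1)‖ := norm_tsum_le_tsum_norm hsummable
    _ ≤ ∑' k : ℕ, ‖x‖ ^ (k+1) / (Nat.factorial (k+1) : ℝ) := Summable.tsum_le_tsum hb hsummable hg.summable
    _ = Real.exp ‖x‖ - 1 := hg.tsum_eq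

set_option maxHeartbeats 1000000 in
set_option synthInstance.maxHeartbeats 400000 in
/-- bound on the second (integral) contribution to the boundary value
`w(1,t)` of the backstepping target system: with `Ω₁ = ‖K‖e^{‖A‖/π₁*}` and
`δ₁(ε) = Ω₁(e^{‖A‖ε} − 1)`, for `ψ, ψ̂ ∈ (0, 1/π₁*]` with `|ψ̂ − ψ| ≤ ε` and `u`
continuous on `[0,1]`,
`|K ∫₀¹ B u(y)[ψ̂ e^{A(1−y)ψ̂} − ψ e^{A(1−y)ψ}] dy| ≤ ‖B‖(Ω₁ε + ψδ₁(ε))∫₀¹|u|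
  ≤ ‖B‖(Ω₁ε + δ₁(ε)/π₁*) (∫₀¹|u|²)^{1/2}`. -/
theorem backstepping_boundary_integral_term_bound
    {n m : ℕ}
    (A : EuclideanSpace ℝ (Fin n) →L[ℝ] EuclideanSpace ℝ (Fin n))
    (B : EuclideanSpace ℝ (Fin m) →L[ℝ] EuclideanSpace ℝ (Fin n))
    (K : EuclideanSpace ℝ (Fin n) →L[ℝ] EuclideanSpace ℝ (Fin m))
    (π₁ ε ψ ψh : ℝ) (hπ₁ : 0 < π₁) (hε : 0 < ε)
    (hψ : ψ ∈ Set.Ioc (0:ℝ) (1 / π₁)) (hψh : ψh ∈ Set.Ioc (0:ℝ) (1 / π₁))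
    (hclose : |ψh - ψ| ≤ ε)
    (u : ℝ → EuclideanSpace ℝ (Fin m)) (hu : ContinuousOn u (Set.Icc 0 1)) :
    ‖K (∫ y in (0:ℝ)..1,
          (ψh • NormedSpace.exp (((1 - y) * ψh) • A)
            - ψ • NormedSpace.exp (((1 - y) * ψ) • A)) (B (u y)))‖
        ≤ ‖B‖ * ((‖K‖ * Real.exp (‖A‖ / π₁)) * ε +
              ψ * (‖K‖ * Real.exp (‖A‖ / π₁) * (Real.exp (‖A‖ * ε) - 1))) *
            ∫ y in (0:ℝ)..1, ‖u y‖ ∧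
      ‖B‖ * ((‖K‖ * Real.exp (‖A‖ / π₁)) * ε +
            ψ * (‖K‖ * Real.exp (‖A‖ / π₁) * (Real.exp (‖A‖ * ε) - 1))) *
          (∫ y in (0:ℝ)..1, ‖u y‖)
        ≤ ‖B‖ * ((‖K‖ * Real.exp (‖A‖ / π₁)) * ε +
              (‖K‖ * Real.exp (‖A‖ / π₁) * (Real.exp (‖A‖ * ε) - 1)) / π₁) *
            Real.sqrt (∫ y in (0:ℝ)..1, ‖u y‖ ^ 2) := by
  obtain ⟨hψ0, hψ1⟩ := hψ
  obtain ⟨hψh0, hψh1⟩ := hψh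
  have hA0 : (0:ℝ) ≤ ‖A‖ := norm_nonneg _
  have h1 : ‖(1 : EuclideanSpace ℝ (Fin n) →L[ℝ] EuclideanSpace ℝ (Fin n))‖ ≤ 1 := by
    rw [ContinuousLinearMap.one_def]; exact ContinuousLinearMap.norm_id_le
  set e₁ : ℝ := Real.exp (‖A‖ / π₁) with he₁
  set M : ℝ := e₁ * ε + ψ * (e₁ * (Real.exp (‖A‖ * ε) - 1)) with hM
  have hexp1 : (1:ℝ) ≤ Real.exp (‖A‖ * ε) :=
    Real.one_le_exp (mul_nonneg hA0 hε.le)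
  have hM0 : 0 ≤ M := by
    have : 0 ≤ ψ * (e₁ * (Real.exp (‖A‖ * ε) - 1)) :=
      mul_nonneg hψ0.le (mul_nonneg (Real.exp_pos _).le (by linarith))
    have h2 : 0 ≤ e₁ * ε := mul_nonneg (Real.exp_pos _).le hε.le
    linarith
  -- pointwise operator bound
  have key : ∀ y ∈ Set.Icc (0:ℝ) 1,
      ‖ψh • NormedSpace.exp (((1 - y) * ψh) • A)
        - ψ • NormedSpace.exp (((1 - y) * ψ) • A)‖ ≤ M := by
    intro y hy
    set s : ℝ := 1 - y with hs
    have hs0 : 0 ≤ s := by simp only [hs]; linarith [hy.2]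
    have hs1 : s ≤ 1 := by simp only [hs]; linarith [hy.1]
    have hbound : ∀ c : ℝ, 0 ≤ c → c ≤ 1 / π₁ →
        ‖NormedSpace.exp ((s * c) • A)‖ ≤ e₁ := by
      intro c hc0 hc1
      refine (aux_norm_exp_le h1 _).trans (Real.exp_le_exp.mpr ?_)
      have hns := norm_smul (s * c) A
      rw [hns, Real.norm_eq_abs, abs_of_nonneg (mul_nonneg hs0 hc0)]
      have hsc : s * c ≤ 1 / π₁ := by
        calc s * c ≤ 1 * c := mul_le_mul_of_nonneg_right hs1 hc0
          _ = c := one_mul c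
          _ ≤ 1 / π₁ := hc1
      calc s * c * ‖A‖ ≤ (1 / π₁) * ‖A‖ := mul_le_mul_of_nonneg_right hsc hA0
        _ = ‖A‖ / π₁ := by ring
    have hEh := hbound ψh hψh0.le hψh1
    have hE := hbound ψ hψ0.le hψ1
    have hprod : NormedSpace.exp ((s * ψh) • A)
        = NormedSpace.exp ((s * ψ) • A) * NormedSpace.exp ((s * (ψh - ψ)) • A) := by
      have hadd : (s * ψ) • A + (s * (ψh - ψ)) • A = (s * ψh) • A := by
        ext v; simp [add_smul]; ring_nf
      have hcomm : Commute ((s * ψ) • A) ((s * (ψh - ψ)) • A) := by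
        unfold Commute SemiconjBy
        ext v
        simp [ContinuousLinearMap.mul_apply, map_smul, smul_smul]
        ring_nf
        simp
      rw [← hadd]
      exact (letI : NormedAlgebra ℚ (EuclideanSpace ℝ (Fin n) →L[ℝ] EuclideanSpace ℝ (Fin n)) := NormedAlgebra.restrictScalars ℚ ℝ _; NormedSpace.exp_add_of_commute hcomm)
    have hdiff : ‖NormedSpace.exp ((s * ψh) • A) - NormedSpace.exp ((s * ψ) • A)‖
        ≤ e₁ * (Real.exp (‖A‖ * ε) - 1) := by
      have heq : NormedSpace.exp ((s * ψh) • A) - NormedSpace.exp ((s * ψ) • A)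
          = NormedSpace.exp ((s * ψ) • A) * (NormedSpace.exp ((s * (ψh - ψ)) • A) - 1) := by
        have h2 := mul_sub (NormedSpace.exp ((s * ψ) • A))
          (NormedSpace.exp ((s * (ψh - ψ)) • A)) 1
        have h3 := mul_one (NormedSpace.exp ((s * ψ) • A))
        rw [hprod, h2, h3]
      rw [heq]
      have hX : ‖NormedSpace.exp ((s * (ψh - ψ)) • A) - 1‖ ≤ Real.exp (‖A‖ * ε) - 1 := by
        refine (aux_norm_exp_sub_one_le _).trans ?_
        have : ‖(s * (ψh - ψ)) • A‖ ≤ ‖A‖ * ε := by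
          have hns := norm_smul (s * (ψh - ψ)) A
          rw [hns, Real.norm_eq_abs, abs_mul, abs_of_nonneg hs0]
          calc s * |ψh - ψ| * ‖A‖ ≤ 1 * ε * ‖A‖ := by
                refine mul_le_mul_of_nonneg_right ?_ hA0
                exact mul_le_mul hs1 hclose (abs_nonneg _) one_pos.le
            _ = ‖A‖ * ε := by ring
        have := Real.exp_le_exp.mpr this
        linarith
      calc ‖NormedSpace.exp ((s * ψ) • A) * (NormedSpace.exp ((s * (ψh - ψ)) • A) - 1)‖
          ≤ ‖NormedSpace.exp ((s * ψ) • A)‖ * ‖NormedSpace.exp ((s * (ψh - ψ)) • A) - 1‖ :=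
            norm_mul_le _ _
        _ ≤ e₁ * (Real.exp (‖A‖ * ε) - 1) :=
            mul_le_mul hE hX (norm_nonneg _) (Real.exp_pos _).le
    calc ‖ψh • NormedSpace.exp ((s * ψh) • A) - ψ • NormedSpace.exp ((s * ψ) • A)‖
        = ‖(ψh - ψ) • NormedSpace.exp ((s * ψh) • A)
            + ψ • (NormedSpace.exp ((s * ψh) • A) - NormedSpace.exp ((s * ψ) • A))‖ := by
          congr 1
          have h₁ := sub_smul ψh ψ (NormedSpace.exp ((s * ψh) • A))
          have h₂ := smul_sub ψ (NormedSpace.exp ((s * ψh) • A))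
            (NormedSpace.exp ((s * ψ) • A))
          rw [h₁, h₂]
          abel
      _ ≤ ‖(ψh - ψ) • NormedSpace.exp ((s * ψh) • A)‖
            + ‖ψ • (NormedSpace.exp ((s * ψh) • A) - NormedSpace.exp ((s * ψ) • A))‖ :=
          norm_add_le _ _
      _ ≤ ε * e₁ + ψ * (e₁ * (Real.exp (‖A‖ * ε) - 1)) := by
          refine add_le_add ?_ ?_
          · have hns := norm_smul (ψh - ψ) (NormedSpace.exp ((s * ψh) • A))
            rw [hns, Real.norm_eq_abs]
            exact mul_le_mul hclose hEh (norm_nonneg _) hε.le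
          · have hns := norm_smul ψ (NormedSpace.exp ((s * ψh) • A)
              - NormedSpace.exp ((s * ψ) • A))
            rw [hns, Real.norm_eq_abs, abs_of_nonneg hψ0.le]
            exact mul_le_mul_of_nonneg_left hdiff hψ0.le
      _ = M := by rw [hM]; ring
  -- the integrand
  set F : ℝ → EuclideanSpace ℝ (Fin n) := fun y =>
    (ψh • NormedSpace.exp (((1 - y) * ψh) • A)
      - ψ • NormedSpace.exp (((1 - y) * ψ) • A)) (B (u y)) with hF
  have hT : Continuous (fun y : ℝ => ψh • NormedSpace.exp (((1 - y) * ψh) • A)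
      - ψ • NormedSpace.exp (((1 - y) * ψ) • A)) := by
    have hc : ∀ c : ℝ, Continuous (fun y : ℝ => NormedSpace.exp (((1 - y) * c) • A)) := by
      intro c
      exact (letI : NormedAlgebra ℚ (EuclideanSpace ℝ (Fin n) →L[ℝ] EuclideanSpace ℝ (Fin n)) := NormedAlgebra.restrictScalars ℚ ℝ _; NormedSpace.exp_continuous).comp
        (((continuous_const.sub continuous_id).mul continuous_const).smul continuous_const)
    exact ((hc ψh).const_smul ψh).sub ((hc ψ).const_smul ψ)
  have huIcc : Set.uIcc (0:ℝ) 1 = Set.Icc 0 1 := Set.uIcc_of_le (by norm_num)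
  have hFc : ContinuousOn F (Set.Icc 0 1) :=
    (hT.continuousOn).clm_apply (B.continuous.comp_continuousOn hu)
  have hFint : IntervalIntegrable F MeasureTheory.volume 0 1 :=
    (huIcc ▸ hFc).intervalIntegrable
  have huN : IntervalIntegrable (fun y => ‖u y‖) MeasureTheory.volume 0 1 :=
    (huIcc ▸ hu.norm).intervalIntegrable
  have huN2 : IntervalIntegrable (fun y => ‖u y‖ ^ 2) MeasureTheory.volume 0 1 :=
    (huIcc ▸ (hu.norm.pow 2)).intervalIntegrable
  have hg : IntervalIntegrable (fun y => M * (‖B‖ * ‖u y‖)) MeasureTheory.volume 0 1 :=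
    (huN.const_mul ‖B‖).const_mul M
  have hle : ∀ y ∈ Set.Icc (0:ℝ) 1, ‖F y‖ ≤ M * (‖B‖ * ‖u y‖) := by
    intro y hy
    calc ‖F y‖ ≤ ‖ψh • NormedSpace.exp (((1 - y) * ψh) • A)
          - ψ • NormedSpace.exp (((1 - y) * ψ) • A)‖ * ‖B (u y)‖ :=
        ContinuousLinearMap.le_opNorm _ _
      _ ≤ M * (‖B‖ * ‖u y‖) :=
        mul_le_mul (key y hy) (B.le_opNorm _) (norm_nonneg _) hM0
  have hI1 : 0 ≤ ∫ y in (0:ℝ)..1, ‖u y‖ :=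
    intervalIntegral.integral_nonneg (by norm_num) (fun _ _ => norm_nonneg _)
  constructor
  · calc ‖K (∫ y in (0:ℝ)..1, F y)‖
        ≤ ‖K‖ * ‖∫ y in (0:ℝ)..1, F y‖ := K.le_opNorm _
      _ ≤ ‖K‖ * ∫ y in (0:ℝ)..1, ‖F y‖ :=
        mul_le_mul_of_nonneg_left
          (intervalIntegral.norm_integral_le_integral_norm (by norm_num)) (norm_nonneg K)
      _ ≤ ‖K‖ * ∫ y in (0:ℝ)..1, M * (‖B‖ * ‖u y‖) :=
        mul_le_mul_of_nonneg_left
          (intervalIntegral.integral_mono_on (by norm_num) hFint.norm hg hle) (norm_nonneg K)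
      _ = ‖B‖ * ((‖K‖ * e₁) * ε + ψ * (‖K‖ * e₁ * (Real.exp (‖A‖ * ε) - 1))) *
            ∫ y in (0:ℝ)..1, ‖u y‖ := by
        rw [intervalIntegral.integral_const_mul, intervalIntegral.integral_const_mul, hM]
        ring
  · set I₁ : ℝ := ∫ y in (0:ℝ)..1, ‖u y‖ with hI₁def
    set I₂ : ℝ := ∫ y in (0:ℝ)..1, ‖u y‖ ^ 2 with hI₂def
    have hsq : I₁ ^ 2 ≤ I₂ := by
      have h0 : 0 ≤ ∫ y in (0:ℝ)..1, (‖u y‖ - I₁) ^ 2 :=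
        intervalIntegral.integral_nonneg (by norm_num) (fun _ _ => sq_nonneg _)
      have hexpand : (∫ y in (0:ℝ)..1, (‖u y‖ - I₁) ^ 2) = I₂ - I₁ ^ 2 := by
        have hcongr : ∀ y ∈ Set.uIcc (0:ℝ) 1, (‖u y‖ - I₁) ^ 2
            = ‖u y‖ ^ 2 - 2 * I₁ * ‖u y‖ + I₁ ^ 2 := fun y _ => by ring
        rw [intervalIntegral.integral_congr hcongr,
          intervalIntegral.integral_add (huN2.sub (huN.const_mul _)) intervalIntegrable_const,
          intervalIntegral.integral_sub huN2 (huN.const_mul _),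
          intervalIntegral.integral_const_mul, intervalIntegral.integral_const]
        simp only [smul_eq_mul, sub_zero]
        rw [← hI₁def, ← hI₂def]
        ring
      linarith
    have hsqrt : I₁ ≤ Real.sqrt I₂ := Real.le_sqrt_of_sq_le hsq
    have hD0 : 0 ≤ ‖K‖ * e₁ * (Real.exp (‖A‖ * ε) - 1) :=
      mul_nonneg (mul_nonneg (norm_nonneg K) (Real.exp_pos _).le) (by linarith)
    have hψD : ψ * (‖K‖ * e₁ * (Real.exp (‖A‖ * ε) - 1))
        ≤ (‖K‖ * e₁ * (Real.exp (‖A‖ * ε) - 1)) / π₁ := by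
      calc ψ * (‖K‖ * e₁ * (Real.exp (‖A‖ * ε) - 1))
          ≤ (1 / π₁) * (‖K‖ * e₁ * (Real.exp (‖A‖ * ε) - 1)) :=
            mul_le_mul_of_nonneg_right hψ1 hD0
        _ = (‖K‖ * e₁ * (Real.exp (‖A‖ * ε) - 1)) / π₁ := by ring
    have hC₂0 : 0 ≤ (‖K‖ * e₁) * ε + (‖K‖ * e₁ * (Real.exp (‖A‖ * ε) - 1)) / π₁ := by
      have : 0 ≤ (‖K‖ * e₁) * ε :=
        mul_nonneg (mul_nonneg (norm_nonneg K) (Real.exp_pos _).le) hε.le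
      have := div_nonneg hD0 hπ₁.le
      linarith
    calc ‖B‖ * ((‖K‖ * e₁) * ε + ψ * (‖K‖ * e₁ * (Real.exp (‖A‖ * ε) - 1))) * I₁
        ≤ ‖B‖ * ((‖K‖ * e₁) * ε + (‖K‖ * e₁ * (Real.exp (‖A‖ * ε) - 1)) / π₁) * I₁ := by
          refine mul_le_mul_of_nonneg_right ?_ hI1
          exact mul_le_mul_of_nonneg_left (add_le_add_right hψD _) (norm_nonneg B)
      _ ≤ ‖B‖ * ((‖K‖ * e₁) * ε + (‖K‖ * e₁ * (Real.exp (‖A‖ * ε) - 1)) / π₁) *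
            Real.sqrt I₂ :=
          mul_le_mul_of_nonneg_left hsqrt (mul_nonneg (norm_nonneg B) hC₂0)
end
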